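/- arXiv:2309.04913 — 5 statements merged into one kernel-verified Lean document; each statement's English description precedes it below -/
import Mathlib

section
/- If A is a commutative associative algebra over a field k equipped with a derivation d (satisfying d(ab) = a·d(b) + d(a)·b), then the new multiplication a * b := a·d(b) makes A into a perm algebra, i.e., (a*b)*c = a*(b*c) = a*(c*b) for all a, b, c in A. -/
theorem map_mul_map_of_leibniz_of_map_map_eq_zero {A : Type*} [NonUnitalNonAssocSemiring A]
    (d : A → A) (hleib : ∀ a b : A, d (a * b) = a * d b + d a * b)
    (hdd : ∀ a : A, d (d a) = 0) (b c : A) :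
    d (b * d c) = d b * d c := by
  rw [hleib, hdd, mul_zero, zero_add]

/-- If `A` is a commutative associative algebra over a field `k` equipped with a derivation
`d` (a linear map satisfying `d(ab) = a·d(b) + d(a)·b` and `d ∘ d = 0`), then the new
multiplication `a * b := a·d(b)` makes `A` into a perm algebra. -/
theorem derivation_gives_perm {k A : Type*} [Field k] [CommRing A] [Algebra k A]
    (d : A →ₗ[k] A)
    (hleib : ∀ a b : A, d (a * b) = a * d b + d a * b)
    (hdd : ∀ a : A, d (d a) = 0)
    (a b c : A) :
    (a * d b) * d c = a * d (b * d c) ∧ a * d (b * d c) = a * d (c * d b) := by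
  have hd := map_mul_map_of_leibniz_of_map_map_eq_zero d hleib hdd
  rw [hd, hd]
  exact ⟨mul_assoc a (d b) (d c), by rw [mul_comm (d b)]⟩
end

section
/- Let A be a perm algebra and (V, κl, κr) a representation of A. Define κl*, κr* : A → End(V*) by ⟨κl*(a)(u), v⟩ = ⟨u, κl(a)(v)⟩ and ⟨κr*(a)(u), v⟩ = ⟨u, κr(a)(v)⟩. Then (V*, κr* − κl*, κr*) is a representation of A. -/
/-!
Dualization reverses the order of composition, so it suffices to check that `θ := κr - κl`
satisfies `θ (a₁ a₂) = θ a₂ ∘ θ a₁ = κr a₂ ∘ θ a₁ = θ a₁ ∘ κr a₂` on `V` itself.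
-/

open Module

def IsPermRep {R A V : Type*} [CommSemiring R] [AddCommMonoid A] [Module R A]
    [AddCommMonoid V] [Module R V]
    (mul : A →ₗ[R] A →ₗ[R] A) (κl κr : A →ₗ[R] V →ₗ[R] V) : Prop :=
  ∀ a1 a2 : A,
    κr (mul a1 a2) = κr a2 ∘ₗ κr a1 ∧
    κr (mul a1 a2) = κr a1 ∘ₗ κr a2 ∧
    κl (mul a1 a2) = κl a1 ∘ₗ κl a2 ∧
    κl (mul a1 a2) = κl a1 ∘ₗ κr a2 ∧
    κl (mul a1 a2) = κr a2 ∘ₗ κl a1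

namespace IsPermRep

variable {R A V : Type*} [CommRing R] [AddCommGroup A] [Module R A] [AddCommGroup V] [Module R V]
  {mul : A →ₗ[R] A →ₗ[R] A} {κl κr : A →ₗ[R] V →ₗ[R] V}

theorem sub_apply_mul_eq_sub_comp_sub (h : IsPermRep mul κl κr) (a1 a2 : A) :
    (κr - κl) (mul a1 a2) = (κr - κl) a2 ∘ₗ (κr - κl) a1 := by
  -- the cross terms cancel because `κl a2 ∘ κl a1 = κl (a2 a1) = κl a2 ∘ κr a1`
  have hcross : κl a2 ∘ₗ κl a1 = κl a2 ∘ₗ κr a1 := by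
    rw [← (h a2 a1).2.2.1, (h a2 a1).2.2.2.1]
  rw [LinearMap.sub_apply, LinearMap.sub_apply, LinearMap.sub_apply, LinearMap.comp_sub,
    LinearMap.sub_comp, LinearMap.sub_comp, hcross, ← (h a1 a2).1, ← (h a1 a2).2.2.2.2]
  abel

theorem sub_apply_mul_eq_sub_comp_right (h : IsPermRep mul κl κr) (a1 a2 : A) :
    (κr - κl) (mul a1 a2) = (κr - κl) a1 ∘ₗ κr a2 := by
  rw [LinearMap.sub_apply, LinearMap.sub_apply, LinearMap.sub_comp, ← (h a1 a2).2.1,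
    ← (h a1 a2).2.2.2.1]

theorem sub_apply_mul_eq_right_comp_sub (h : IsPermRep mul κl κr) (a1 a2 : A) :
    (κr - κl) (mul a1 a2) = κr a2 ∘ₗ (κr - κl) a1 := by
  rw [LinearMap.sub_apply, LinearMap.sub_apply, LinearMap.comp_sub, ← (h a1 a2).1,
    ← (h a1 a2).2.2.2.2]

theorem dual (h : IsPermRep mul κl κr) :
    IsPermRep mul (Dual.transpose ∘ₗ (κr - κl)) (Dual.transpose ∘ₗ κr) := by
  intro a1 a2
  simp only [LinearMap.comp_apply, ← Dual.transpose_comp]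
  refine ⟨?_, ?_, ?_, ?_, ?_⟩
  · rw [(h a1 a2).2.1]
  · rw [(h a1 a2).1]
  · rw [h.sub_apply_mul_eq_sub_comp_sub]
  · rw [h.sub_apply_mul_eq_right_comp_sub]
  · rw [h.sub_apply_mul_eq_sub_comp_right]

end IsPermRep

theorem dual_representation_general {k A V : Type*} [Field k] [AddCommGroup A] [Module k A]
    [AddCommGroup V] [Module k V]
    (mul : A →ₗ[k] A →ₗ[k] A)
    (κl κr : A →ₗ[k] V →ₗ[k] V)
    (hrep : ∀ a1 a2 : A,
      κr (mul a1 a2) = κr a2 ∘ₗ κr a1 ∧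
      κr (mul a1 a2) = κr a1 ∘ₗ κr a2 ∧
      κl (mul a1 a2) = κl a1 ∘ₗ κl a2 ∧
      κl (mul a1 a2) = κl a1 ∘ₗ κr a2 ∧
      κl (mul a1 a2) = κr a2 ∘ₗ κl a1) :
    ∀ a1 a2 : A,
      (κr (mul a1 a2)).dualMap = (κr a2).dualMap ∘ₗ (κr a1).dualMap ∧
      (κr (mul a1 a2)).dualMap = (κr a1).dualMap ∘ₗ (κr a2).dualMap ∧
      ((κr (mul a1 a2)).dualMap - (κl (mul a1 a2)).dualMap) =
        ((κr a1).dualMap - (κl a1).dualMap) ∘ₗ ((κr a2).dualMap - (κl a2).dualMap) ∧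
      ((κr (mul a1 a2)).dualMap - (κl (mul a1 a2)).dualMap) =
        ((κr a1).dualMap - (κl a1).dualMap) ∘ₗ (κr a2).dualMap ∧
      ((κr (mul a1 a2)).dualMap - (κl (mul a1 a2)).dualMap) =
        (κr a2).dualMap ∘ₗ ((κr a1).dualMap - (κl a1).dualMap) := by
  simpa only [IsPermRep, LinearMap.comp_apply, LinearMap.sub_apply, map_sub,
    LinearMap.dualMap_def] using IsPermRep.dual hrep

/-- If `(V, κl, κr)` is a representation of a perm algebra `A`, then
`(V*, κr* − κl*, κr*)` is also a representation of `A` (the dual representation),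
where `κl*(a)` and `κr*(a)` are the dual maps of `κl(a)` and `κr(a)`. -/
theorem dual_representation {k A V : Type*} [Field k] [AddCommGroup A] [Module k A]
    [AddCommGroup V] [Module k V] [FiniteDimensional k V]
    (mul : A →ₗ[k] A →ₗ[k] A)
    (hp1 : ∀ x y z, mul (mul x y) z = mul x (mul y z))
    (hp2 : ∀ x y z, mul x (mul y z) = mul x (mul z y))
    (κl κr : A →ₗ[k] V →ₗ[k] V)
    (hrep : ∀ a1 a2 : A,
      κr (mul a1 a2) = κr a2 ∘ₗ κr a1 ∧
      κr (mul a1 a2) = κr a1 ∘ₗ κr a2 ∧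
      κl (mul a1 a2) = κl a1 ∘ₗ κl a2 ∧
      κl (mul a1 a2) = κl a1 ∘ₗ κr a2 ∧
      κl (mul a1 a2) = κr a2 ∘ₗ κl a1) :
    ∀ a1 a2 : A,
      (κr (mul a1 a2)).dualMap = (κr a2).dualMap ∘ₗ (κr a1).dualMap ∧
      (κr (mul a1 a2)).dualMap = (κr a1).dualMap ∘ₗ (κr a2).dualMap ∧
      ((κr (mul a1 a2)).dualMap - (κl (mul a1 a2)).dualMap) =
        ((κr a1).dualMap - (κl a1).dualMap) ∘ₗ ((κr a2).dualMap - (κl a2).dualMap) ∧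
      ((κr (mul a1 a2)).dualMap - (κl (mul a1 a2)).dualMap) =
        ((κr a1).dualMap - (κl a1).dualMap) ∘ₗ (κr a2).dualMap ∧
      ((κr (mul a1 a2)).dualMap - (κl (mul a1 a2)).dualMap) =
        (κr a2).dualMap ∘ₗ ((κr a1).dualMap - (κl a1).dualMap) :=
  dual_representation_general mul κl κr hrep
end

section
/- Let A be a perm algebra admitting a nondegenerate skew-symmetric invariant bilinear form ω (invariance meaning ω(a1a2, a3) = ω(a2, a3a1) − ω(a2, a1a3)). Then the regular representation (A, κl, κr) of A is isomorphic to the dual representation (A*, κr* − κl*, κr*), via the map φ : A → A* with ⟨φ(a1), a2⟩ = ω(a1, a2). -/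
/-!
Skew-symmetry turns the invariance of `ω`, which prescribes how left multiplication moves
across the form, into the identity `ω (x a) b = ω x (b a)` for right multiplication. Read
through `φ = ω`, these two identities say exactly that `φ` intertwines `κl` with `κr* − κl*`
and `κr` with `κr*`; nondegeneracy and `dim A = dim A*` make `φ` bijective.
-/

section InvariantForm

variable {k A : Type*} [CommRing k] [AddCommGroup A] [Module k A]
  (mul : A →ₗ[k] A →ₗ[k] A) (ω : A →ₗ[k] Module.Dual k A)

theorem apply_mul_left_eq_dualMap_sub
    (hinv : ∀ a1 a2 a3 : A, ω (mul a1 a2) a3 = ω a2 (mul a3 a1) - ω a2 (mul a1 a3))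
    (a x : A) : ω (mul a x) = ((mul.flip a).dualMap - (mul a).dualMap) (ω x) := by
  ext b
  exact hinv a x b

theorem apply_mul_right_apply_eq_of_skew
    (hskew : ∀ a b : A, ω a b = - ω b a)
    (hinv : ∀ a1 a2 a3 : A, ω (mul a1 a2) a3 = ω a2 (mul a3 a1) - ω a2 (mul a1 a3))
    (a x b : A) : ω (mul x a) b = ω x (mul b a) := by
  have hswap : ω x (mul a b) = ω (mul x a) b - ω (mul a x) b := by
    linear_combination hskew x (mul a b) - hinv a b x - hskew b (mul x a) + hskew b (mul a x)
  linear_combination hinv a x b - hswap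

theorem apply_mul_right_eq_dualMap_of_skew
    (hskew : ∀ a b : A, ω a b = - ω b a)
    (hinv : ∀ a1 a2 a3 : A, ω (mul a1 a2) a3 = ω a2 (mul a3 a1) - ω a2 (mul a1 a3))
    (a x : A) : ω (mul x a) = (mul.flip a).dualMap (ω x) := by
  ext b
  exact apply_mul_right_apply_eq_of_skew mul ω hskew hinv a x b

end InvariantForm

theorem LinearMap.bijective_toDual_of_injective {k A : Type*} [Field k] [AddCommGroup A]
    [Module k A] [FiniteDimensional k A] (φ : A →ₗ[k] Module.Dual k A)
    (hφ : Function.Injective φ) : Function.Bijective φ :=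
  ⟨hφ, (injective_iff_surjective_of_finrank_eq_finrank Subspace.dual_finrank_eq.symm).mp hφ⟩

theorem regular_iso_dual_representation_general {k A : Type*} [Field k] [AddCommGroup A] [Module k A]
    [FiniteDimensional k A]
    (mul : A →ₗ[k] A →ₗ[k] A)
    (ω : A →ₗ[k] Module.Dual k A)
    (hskew : ∀ a b : A, ω a b = - ω b a)
    (hinv : ∀ a1 a2 a3 : A, ω (mul a1 a2) a3 = ω a2 (mul a3 a1) - ω a2 (mul a1 a3))
    (hnd : ∀ a : A, ω a = 0 → a = 0) :
    Function.Bijective ω ∧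
    (∀ a x : A, ω (mul a x) = ((mul.flip a).dualMap - (mul a).dualMap) (ω x)) ∧
    (∀ a x : A, ω (mul x a) = (mul.flip a).dualMap (ω x)) :=
  ⟨ω.bijective_toDual_of_injective ((injective_iff_map_eq_zero ω).mpr hnd),
    apply_mul_left_eq_dualMap_sub mul ω hinv,
    apply_mul_right_eq_dualMap_of_skew mul ω hskew hinv⟩

/-- If a perm algebra `A` admits a nondegenerate skew-symmetric invariant bilinear form `ω`
(viewed as a map `ω : A →ₗ A*`), then `φ = ω` is an isomorphism from the regular
representation `(A, κl, κr)` to the dual representation `(A*, κr* − κl*, κr*)`. -/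
theorem regular_iso_dual_representation {k A : Type*} [Field k] [AddCommGroup A] [Module k A]
    [FiniteDimensional k A]
    (mul : A →ₗ[k] A →ₗ[k] A)
    (hp1 : ∀ x y z, mul (mul x y) z = mul x (mul y z))
    (hp2 : ∀ x y z, mul x (mul y z) = mul x (mul z y))
    (ω : A →ₗ[k] Module.Dual k A)
    (hskew : ∀ a b : A, ω a b = - ω b a)
    (hinv : ∀ a1 a2 a3 : A, ω (mul a1 a2) a3 = ω a2 (mul a3 a1) - ω a2 (mul a1 a3))
    (hnd : ∀ a : A, ω a = 0 → a = 0) :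
    Function.Bijective ω ∧
    (∀ a x : A, ω (mul a x) = ((mul.flip a).dualMap - (mul a).dualMap) (ω x)) ∧
    (∀ a x : A, ω (mul x a) = (mul.flip a).dualMap (ω x)) :=
  regular_iso_dual_representation_general mul ω hskew hinv hnd
end

section
/- Let A be a vector space and Δ : A → A ⊗ A a linear map, with A finite-dimensional. Then the dual map Δ* : A* ⊗ A* → A* defines a perm algebra structure on A* if and only if (Δ ⊗ id)∘Δ = (id ⊗ Δ)∘Δ = (id ⊗ τΔ)∘Δ, where τ is the flip map on A ⊗ A. -/
open TensorProduct

/-- The multiplication on `A*` dual to a comultiplication `Δ : A → A ⊗ A`: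
`⟨Δ*(b₁ ⊗ b₂), a⟩ = ⟨b₁ ⊗ b₂, Δ(a)⟩`. -/
noncomputable def dualMul {k A : Type*} [Field k] [AddCommGroup A] [Module k A]
    (Δ : A →ₗ[k] A ⊗[k] A) (b1 b2 : Module.Dual k A) : Module.Dual k A :=
  (TensorProduct.lid k k).toLinearMap ∘ₗ TensorProduct.map b1 b2 ∘ₗ Δ

/-!
Unwinding `dualMul`, the products `(b₁b₂)b₃`, `b₁(b₂b₃)` and `b₁(b₃b₂)` evaluated at `a` are the
pairings of `b₁ ⊗ b₂ ⊗ b₃` with `(Δ ⊗ id)Δa` (reassociated), `(id ⊗ Δ)Δa` and `(id ⊗ τΔ)Δa`.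
Pure tensors of functionals separate the points of `A ⊗ (A ⊗ A)`, since the coordinates with
respect to a product basis are such pairings; so the identities in `A*` and in `A ⊗ A ⊗ A` are
equivalent.
-/

open Module LinearMap

lemma Module.Basis.tensorProduct_coord {R M N ι κ : Type*} [CommRing R] [AddCommGroup M]
    [Module R M] [AddCommGroup N] [Module R N] (b : Basis ι R M) (c : Basis κ R N)
    (i : ι) (j : κ) :
    (b.tensorProduct c).coord (i, j) = dualDistrib R M N (b.coord i ⊗ₜ c.coord j) := by
  ext
  simp [mul_comm]

namespace TensorProduct

variable {R M N P M' N' : Type*} [CommRing R]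
  [AddCommGroup M] [Module R M] [AddCommGroup N] [Module R N] [AddCommGroup P] [Module R P]
  [AddCommGroup M'] [Module R M'] [AddCommGroup N'] [Module R N']

lemma dualDistrib_comp_tmul (f : Dual R M') (g : Dual R N) (u : M →ₗ[R] M') :
    dualDistrib R M N ((f ∘ₗ u) ⊗ₜ g) = dualDistrib R M' N (f ⊗ₜ g) ∘ₗ map u id :=
  ext' fun _ _ ↦ rfl

lemma dualDistrib_tmul_comp (f : Dual R M) (g : Dual R N') (v : N →ₗ[R] N') :
    dualDistrib R M N (f ⊗ₜ (g ∘ₗ v)) = dualDistrib R M N' (f ⊗ₜ g) ∘ₗ map id v :=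
  ext' fun _ _ ↦ rfl

lemma dualDistrib_tmul_comm (f : Dual R M) (g : Dual R N) :
    dualDistrib R N M (g ⊗ₜ f) =
      dualDistrib R M N (f ⊗ₜ g) ∘ₗ (TensorProduct.comm R N M).toLinearMap :=
  ext' fun _ _ ↦ mul_comm _ _

noncomputable def dualDistrib₃ (f : Dual R M) (g : Dual R N) (h : Dual R P) :
    Dual R (M ⊗[R] (N ⊗[R] P)) :=
  dualDistrib R M (N ⊗[R] P) (f ⊗ₜ dualDistrib R N P (g ⊗ₜ h))

lemma dualDistrib_dualDistrib_tmul (f : Dual R M) (g : Dual R N) (h : Dual R P) :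
    dualDistrib R (M ⊗[R] N) P (dualDistrib R M N (f ⊗ₜ g) ⊗ₜ h) =
      dualDistrib₃ f g h ∘ₗ (TensorProduct.assoc R M N P).toLinearMap := by
  ext
  simp [dualDistrib₃, mul_assoc]

lemma ext_dualDistrib₃ [Free R M] [Free R N] [Free R P] {x y : M ⊗[R] (N ⊗[R] P)}
    (hxy : ∀ f g h, dualDistrib₃ f g h x = dualDistrib₃ f g h y) : x = y := by
  let b := Free.chooseBasis R M
  let c := Free.chooseBasis R N
  let d := Free.chooseBasis R P
  refine (b.tensorProduct (c.tensorProduct d)).ext_elem fun ⟨i, j, l⟩ ↦ ?_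
  simpa only [dualDistrib₃, ← Basis.coord_apply, Basis.tensorProduct_coord]
    using hxy (b.coord i) (c.coord j) (d.coord l)

lemma forall_dualDistrib₃_comp_eq_iff [Free R M] [Free R N] [Free R P] {V : Type*}
    [AddCommGroup V] [Module R V] {φ ψ : V →ₗ[R] M ⊗[R] (N ⊗[R] P)} :
    (∀ f g h, dualDistrib₃ f g h ∘ₗ φ = dualDistrib₃ f g h ∘ₗ ψ) ↔ ∀ v, φ v = ψ v :=
  ⟨fun hφψ v ↦ ext_dualDistrib₃ fun f g h ↦ LinearMap.congr_fun (hφψ f g h) v,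
    fun hφψ f g h ↦ LinearMap.ext fun v ↦ congrArg (dualDistrib₃ f g h) (hφψ v)⟩

end TensorProduct

section
variable {k A : Type*} [Field k] [AddCommGroup A] [Module k A] (Δ : A →ₗ[k] A ⊗[k] A)
  (b1 b2 b3 : Dual k A)

lemma dualMul_eq : dualMul Δ b1 b2 = dualDistrib k A A (b1 ⊗ₜ b2) ∘ₗ Δ := rfl

lemma dualMul_dualMul_left_eq :
    dualMul Δ (dualMul Δ b1 b2) b3 = dualDistrib₃ b1 b2 b3 ∘ₗ
      (TensorProduct.assoc k A A A).toLinearMap ∘ₗ map Δ id ∘ₗ Δ := by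
  rw [dualMul_eq, dualMul_eq, dualDistrib_comp_tmul, dualDistrib_dualDistrib_tmul]
  rfl

lemma dualMul_dualMul_right_eq :
    dualMul Δ b1 (dualMul Δ b2 b3) = dualDistrib₃ b1 b2 b3 ∘ₗ map id Δ ∘ₗ Δ := by
  rw [dualMul_eq, dualMul_eq, dualDistrib_tmul_comp]
  rfl

lemma dualMul_dualMul_right_swap_eq :
    dualMul Δ b1 (dualMul Δ b3 b2) = dualDistrib₃ b1 b2 b3 ∘ₗ
      map id ((TensorProduct.comm k A A).toLinearMap ∘ₗ Δ) ∘ₗ Δ := by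
  rw [dualMul_eq, dualMul_eq, dualDistrib_tmul_comm b2 b3, comp_assoc, dualDistrib_tmul_comp]
  rfl

end

theorem dual_perm_iff_cocoassoc_general {k A : Type*} [Field k] [AddCommGroup A] [Module k A]
    (Δ : A →ₗ[k] A ⊗[k] A) :
    (∀ b1 b2 b3 : Module.Dual k A,
      dualMul Δ (dualMul Δ b1 b2) b3 = dualMul Δ b1 (dualMul Δ b2 b3) ∧
      dualMul Δ b1 (dualMul Δ b2 b3) = dualMul Δ b1 (dualMul Δ b3 b2))
    ↔
    (∀ a : A,
      (TensorProduct.assoc k A A A) ((TensorProduct.map Δ LinearMap.id) (Δ a)) =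
        (TensorProduct.map LinearMap.id Δ) (Δ a) ∧
      (TensorProduct.map LinearMap.id Δ) (Δ a) =
        (TensorProduct.map LinearMap.id
          ((TensorProduct.comm k A A).toLinearMap ∘ₗ Δ)) (Δ a)) := by
  simp only [forall_and]
  refine and_congr ?_ ?_
  · simp only [dualMul_dualMul_left_eq, dualMul_dualMul_right_eq]
    exact forall_dualDistrib₃_comp_eq_iff
  · calc _ ↔ ∀ b1 b2 b3 : Dual k A, dualDistrib₃ b1 b2 b3 ∘ₗ map id Δ ∘ₗ Δ =
          dualDistrib₃ b1 b2 b3 ∘ₗ map id ((TensorProduct.comm k A A).toLinearMap ∘ₗ Δ) ∘ₗ Δ :=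
          forall₃_congr fun b1 b2 b3 ↦ by
            rw [dualMul_dualMul_right_eq, dualMul_dualMul_right_swap_eq]
      _ ↔ _ := forall_dualDistrib₃_comp_eq_iff

/-- For a linear map `Δ : A → A ⊗ A` on a finite-dimensional space, the dual map
`Δ* : A* ⊗ A* → A*` defines a perm algebra structure on `A*` if and only if
`(Δ ⊗ id)∘Δ = (id ⊗ Δ)∘Δ = (id ⊗ τΔ)∘Δ`. -/
theorem dual_perm_iff_cocoassoc {k A : Type*} [Field k] [AddCommGroup A] [Module k A]
    [FiniteDimensional k A]
    (Δ : A →ₗ[k] A ⊗[k] A) :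
    (∀ b1 b2 b3 : Module.Dual k A,
      dualMul Δ (dualMul Δ b1 b2) b3 = dualMul Δ b1 (dualMul Δ b2 b3) ∧
      dualMul Δ b1 (dualMul Δ b2 b3) = dualMul Δ b1 (dualMul Δ b3 b2))
    ↔
    (∀ a : A,
      (TensorProduct.assoc k A A A) ((TensorProduct.map Δ LinearMap.id) (Δ a)) =
        (TensorProduct.map LinearMap.id Δ) (Δ a) ∧
      (TensorProduct.map LinearMap.id Δ) (Δ a) =
        (TensorProduct.map LinearMap.id
          ((TensorProduct.comm k A A).toLinearMap ∘ₗ Δ)) (Δ a)) :=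
  dual_perm_iff_cocoassoc_general Δ
end

section
/- Let E be a perm algebra, A a perm subalgebra of E, and π_A : E → A a linear projection with π_A(a) = a for all a ∈ A. Set V = Ker(π_A). Define a⇀v = av − π_A(av), v↼a = va − π_A(va), v⊳a = π_A(va), a⊲v = π_A(av), χ(v1,v2) = π_A(v1v2), v1·v2 = v1v2 − π_A(v1v2). Then the map φ : A ⊕ V → E, (a,v) ↦ a + v, is an isomorphism of perm algebras from the unified product A♮V (with multiplication (a1,v1)∗(a2,v2) = (a1a2 + v1⊳a2 + a1⊲v2 + χ(v1,v2), v1·v2 + a1⇀v2 + v1↼a2)) onto E. -/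
/-!
A pair `(a, v)` with `a ∈ A` and `v ∈ ker p` is recovered from `e = a + v` as `(p e, e - p e)`.
Since `p` fixes the product of the two `A`-parts, the formula for `∗` collapses to exactly this
splitting of the product `(a₁ + v₁)(a₂ + v₂)` in `E`; so `A ♮ V` is `E` written in coordinates,
and closure, the perm identities and multiplicativity of `φ` are all inherited from `E`.
-/

/-- The unified-product multiplication on pairs of elements of `E` induced by a projection
`p` onto the subalgebra `A` (first component the `A`-part, second component the
`V = ker p`-part):
`(a₁,v₁)∗(a₂,v₂) = (a₁a₂ + v₁⊳a₂ + a₁⊲v₂ + χ(v₁,v₂), v₁·v₂ + a₁⇀v₂ + v₁↼a₂)` where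
`a⇀v = av − p(av)`, `v↼a = va − p(va)`, `v⊳a = p(va)`, `a⊲v = p(av)`,
`χ(v₁,v₂) = p(v₁v₂)`, `v₁·v₂ = v₁v₂ − p(v₁v₂)`. -/
def inducedStar {k E : Type*} [Field k] [AddCommGroup E] [Module k E]
    (mul : E →ₗ[k] E →ₗ[k] E) (p : E →ₗ[k] E) : E × E → E × E → E × E :=
  fun x y =>
    (mul x.1 y.1 + p (mul x.2 y.1) + p (mul x.1 y.2) + p (mul x.2 y.2),
     (mul x.2 y.2 - p (mul x.2 y.2)) + (mul x.1 y.2 - p (mul x.1 y.2)) +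
       (mul x.2 y.1 - p (mul x.2 y.1)))

section Split

variable {k E : Type*} [Ring k] [AddCommGroup E] [Module k E]

def splitByProj (p : E →ₗ[k] E) (e : E) : E × E := (p e, e - p e)

theorem splitByProj_fst_add_snd (p : E →ₗ[k] E) (e : E) :
    (splitByProj p e).1 + (splitByProj p e).2 = e :=
  add_sub_cancel _ _

theorem splitByProj_mem {A : Submodule k E} {p : E →ₗ[k] E}
    (hrange : ∀ e : E, p e ∈ A) (hfix : ∀ a ∈ A, p a = a) (e : E) :
    (splitByProj p e).1 ∈ A ∧ p (splitByProj p e).2 = 0 :=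
  ⟨hrange e, by simp [splitByProj, hfix _ (hrange e)]⟩

theorem eq_splitByProj_fst_add_snd {A : Submodule k E} {p : E →ₗ[k] E}
    (hfix : ∀ a ∈ A, p a = a) {x : E × E} (hx : x.1 ∈ A ∧ p x.2 = 0) :
    x = splitByProj p (x.1 + x.2) := by
  have hpx : p (x.1 + x.2) = x.1 := by rw [map_add, hx.2, hfix _ hx.1, add_zero]
  ext <;> simp [splitByProj, hpx]

end Split

theorem inducedStar_eq_splitByProj_mul {k E : Type*} [Field k] [AddCommGroup E] [Module k E]
    (mul : E →ₗ[k] E →ₗ[k] E) (p : E →ₗ[k] E) {x y : E × E}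
    (hmul : p (mul x.1 y.1) = mul x.1 y.1) :
    inducedStar mul p x y = splitByProj p (mul (x.1 + x.2) (y.1 + y.2)) := by
  simp only [inducedStar, splitByProj, map_add, LinearMap.add_apply, hmul, Prod.mk.injEq]
  constructor <;> abel

/-- Let `E` be a perm algebra, `A` a perm subalgebra and `p : E → E` a linear projection
onto `A` fixing `A` pointwise; set `V = ker p`.  Then the induced extending datum makes
`A ♮ V` (realized as pairs `(a, v)` with `a ∈ A`, `v ∈ ker p`) into a perm algebra, and
`φ(a, v) = a + v` is an isomorphism of perm algebras `A ♮ V ≅ E`. -/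
theorem unified_product_realization {k E : Type*} [Field k] [AddCommGroup E] [Module k E]
    (mul : E →ₗ[k] E →ₗ[k] E)
    (hp1 : ∀ x y z, mul (mul x y) z = mul x (mul y z))
    (hp2 : ∀ x y z, mul x (mul y z) = mul x (mul z y))
    (A : Submodule k E)
    (hA : ∀ a ∈ A, ∀ b ∈ A, mul a b ∈ A)
    (p : E →ₗ[k] E)
    (hrange : ∀ e : E, p e ∈ A)
    (hfix : ∀ a ∈ A, p a = a) :
    -- `A ♮ V` is closed:
    (∀ x y : E × E, (x.1 ∈ A ∧ p x.2 = 0) → (y.1 ∈ A ∧ p y.2 = 0) →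
        ((inducedStar mul p x y).1 ∈ A ∧ p (inducedStar mul p x y).2 = 0)) ∧
    -- `A ♮ V` is a perm algebra:
    (∀ x y z : E × E, (x.1 ∈ A ∧ p x.2 = 0) → (y.1 ∈ A ∧ p y.2 = 0) →
        (z.1 ∈ A ∧ p z.2 = 0) →
        inducedStar mul p (inducedStar mul p x y) z =
          inducedStar mul p x (inducedStar mul p y z) ∧
        inducedStar mul p x (inducedStar mul p y z) =
          inducedStar mul p x (inducedStar mul p z y)) ∧
    -- `φ(a,v) = a + v` is multiplicative:
    (∀ x y : E × E, (x.1 ∈ A ∧ p x.2 = 0) → (y.1 ∈ A ∧ p y.2 = 0) →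
        (inducedStar mul p x y).1 + (inducedStar mul p x y).2 =
          mul (x.1 + x.2) (y.1 + y.2)) ∧
    -- `φ` is bijective from `A ♮ V` onto `E`:
    (∀ e : E, ∃! x : E × E, (x.1 ∈ A ∧ p x.2 = 0) ∧ x.1 + x.2 = e) := by
  have star_eq : ∀ {x y : E × E}, x.1 ∈ A ∧ p x.2 = 0 → y.1 ∈ A ∧ p y.2 = 0 →
      inducedStar mul p x y = splitByProj p (mul (x.1 + x.2) (y.1 + y.2)) :=
    fun hx hy => inducedStar_eq_splitByProj_mul mul p (hfix _ (hA _ hx.1 _ hy.1))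
  have closed : ∀ x y : E × E, x.1 ∈ A ∧ p x.2 = 0 → y.1 ∈ A ∧ p y.2 = 0 →
      (inducedStar mul p x y).1 ∈ A ∧ p (inducedStar mul p x y).2 = 0 := fun x y hx hy => by
    rw [star_eq hx hy]; exact splitByProj_mem hrange hfix _
  have mult : ∀ x y : E × E, x.1 ∈ A ∧ p x.2 = 0 → y.1 ∈ A ∧ p y.2 = 0 →
      (inducedStar mul p x y).1 + (inducedStar mul p x y).2 = mul (x.1 + x.2) (y.1 + y.2) :=
    fun x y hx hy => by rw [star_eq hx hy, splitByProj_fst_add_snd]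
  refine ⟨closed, fun x y z hx hy hz => ⟨?_, ?_⟩, mult, fun e => ?_⟩
  · rw [star_eq (closed x y hx hy) hz, star_eq hx (closed y z hy hz), mult x y hx hy,
      mult y z hy hz, hp1]
  · rw [star_eq hx (closed y z hy hz), star_eq hx (closed z y hz hy), mult y z hy hz,
      mult z y hz hy, hp2]
  · refine ⟨splitByProj p e, ⟨splitByProj_mem hrange hfix e, splitByProj_fst_add_snd p e⟩, ?_⟩
    rintro x ⟨hx, rfl⟩
    exact eq_splitByProj_fst_add_snd hfix hx
end
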